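/- (Gaussian sum-rate decomposition) Under the long Markov chain U_1–Y_1–X–Y_2–U_2, I(U_1,U_2;Y_1,Y_2) = I(U_1,U_2;X) + I(U_1;Y_1|X) + I(U_2;Y_2|X). -/

import Mathlib

open Real Finset

/-- Probability that the random variable `X` takes value `a`, under pmf `p` on `Ω`. -/
noncomputable def distOf {Ω A : Type*} [Fintype Ω] [DecidableEq A] (p : Ω → ℝ) (X : Ω → A)
    (a : A) : ℝ :=
  ∑ ω ∈ Finset.univ.filter (fun ω => X ω = a), p ω

/-- Shannon entropy (natural log) of a discrete random variable. -/
noncomputable def Hd {Ω A : Type*} [Fintype Ω] [Fintype A] [DecidableEq A]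
    (p : Ω → ℝ) (X : Ω → A) : ℝ :=
  -∑ a : A, distOf p X a * Real.log (distOf p X a)

/-- Conditional entropy H(X|Y). -/
noncomputable def CHd {Ω A B : Type*} [Fintype Ω] [Fintype A] [DecidableEq A]
    [Fintype B] [DecidableEq B] (p : Ω → ℝ) (X : Ω → A) (Y : Ω → B) : ℝ :=
  Hd p (fun ω => (X ω, Y ω)) - Hd p Y

/-- Mutual information I(X;Y). -/
noncomputable def MId {Ω A B : Type*} [Fintype Ω] [Fintype A] [DecidableEq A]
    [Fintype B] [DecidableEq B] (p : Ω → ℝ) (X : Ω → A) (Y : Ω → B) : ℝ :=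
  Hd p X + Hd p Y - Hd p (fun ω => (X ω, Y ω))

/-- Conditional mutual information I(X;Y|Z). -/
noncomputable def CMId {Ω A B C : Type*} [Fintype Ω] [Fintype A] [DecidableEq A]
    [Fintype B] [DecidableEq B] [Fintype C] [DecidableEq C]
    (p : Ω → ℝ) (X : Ω → A) (Y : Ω → B) (Z : Ω → C) : ℝ :=
  Hd p (fun ω => (X ω, Z ω)) + Hd p (fun ω => (Y ω, Z ω))
    - Hd p (fun ω => (X ω, Y ω, Z ω)) - Hd p Z

/-!
With `U = (U1, U2)` and `Y = (Y1, Y2)`, the chain rule expands `I(U; X, Y)` in two orders: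
`I(U; Y) + I(U; X | Y) = I(U; X) + I(U; Y | X)`. Along the long Markov chain the term
`I(U; X | Y)` vanishes, and the two branches `(Y1, U1)` and `(Y2, U2)` are conditionally
independent given `X`, which splits `I(U; Y | X)` into `I(U1; Y1 | X) + I(U2; Y2 | X)`.
Every such consequence of the Markov chain is extracted from the three defining conditional
independences by the chain rule and the nonnegativity of conditional mutual information.
-/

section Distribution

variable {Ω A : Type*} [Fintype Ω] {p : Ω → ℝ}

theorem distOf_nonneg [DecidableEq A] (hp : ∀ ω, 0 ≤ p ω) (X : Ω → A) (a : A) :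
    0 ≤ distOf p X a :=
  sum_nonneg fun ω _ => hp ω

theorem sum_distOf_mul [Fintype A] [DecidableEq A] (X : Ω → A) (f : A → ℝ) :
    ∑ a, distOf p X a * f a = ∑ ω, p ω * f (X ω) := by
  rw [← sum_fiberwise univ X fun ω => p ω * f (X ω)]
  refine sum_congr rfl fun a _ => ?_
  rw [distOf, sum_mul]
  exact sum_congr rfl fun ω hω => by rw [(mem_filter.1 hω).2]

theorem Hd_eq_sum_log_distOf [Fintype A] [DecidableEq A] (X : Ω → A) :
    Hd p X = -∑ ω, p ω * log (distOf p X (X ω)) := by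
  rw [Hd, sum_distOf_mul X fun a => log (distOf p X a)]

theorem Hd_comp_eq_sum {A' : Type*} [Fintype A] [DecidableEq A] [Fintype A'] [DecidableEq A']
    (X : Ω → A) (g : A → A') :
    Hd p (fun ω => g (X ω)) = -∑ a, distOf p X a * log (distOf p (fun ω => g (X ω)) (g a)) := by
  rw [Hd_eq_sum_log_distOf, sum_distOf_mul X fun a => log (distOf p (fun ω => g (X ω)) (g a))]

theorem Hd_congr {A' : Type*} [Fintype A] [DecidableEq A] [Fintype A'] [DecidableEq A']
    {X : Ω → A} {X' : Ω → A'} (h : ∀ ω ω', X ω = X ω' ↔ X' ω = X' ω') :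
    Hd p X = Hd p X' := by
  simp only [Hd_eq_sum_log_distOf, distOf, h]

theorem sum_distOf [Fintype A] [DecidableEq A] (X : Ω → A) :
    ∑ a, distOf p X a = ∑ ω, p ω := by
  simpa using sum_distOf_mul (p := p) X fun _ => 1

theorem distOf_le_distOf_comp {A' : Type*} [DecidableEq A] [DecidableEq A']
    (hp : ∀ ω, 0 ≤ p ω) (X : Ω → A) (g : A → A') (a : A) :
    distOf p X a ≤ distOf p (fun ω => g (X ω)) (g a) :=
  sum_le_sum_of_subset_of_nonneg (monotone_filter_right _ fun _ _ h => congrArg g h)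
    fun ω _ _ => hp ω

theorem sum_distOf_prod_left {B : Type*} [Fintype A] [DecidableEq A] [DecidableEq B]
    (X : Ω → A) (Y : Ω → B) (b : B) :
    ∑ a, distOf p (fun ω => (X ω, Y ω)) (a, b) = distOf p Y b := by
  rw [distOf, ← sum_fiberwise _ X]
  refine sum_congr rfl fun a _ => ?_
  rw [distOf, filter_filter]
  exact sum_congr (filter_congr fun ω _ => by rw [Prod.mk.injEq, and_comm]) fun _ _ => rfl

end Distribution

theorem sum_mul_log_le_sum_mul_log {ι : Type*} [Fintype ι] {q b : ι → ℝ}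
    (hq : ∀ i, 0 ≤ q i) (hb : ∀ i, 0 ≤ b i) (hqb : ∀ i, 0 < q i → 0 < b i)
    (hsum : ∑ i, b i ≤ ∑ i, q i) :
    ∑ i, q i * log (b i) ≤ ∑ i, q i * log (q i) := by
  have key : ∀ i, q i * log (b i) - q i * log (q i) ≤ b i - q i := by
    intro i
    rcases (hq i).eq_or_lt with h | h
    · simp [← h, hb i]
    · have hlog := log_le_sub_one_of_pos (div_pos (hqb i h) h)
      rw [log_div (hqb i h).ne' h.ne'] at hlog
      calc q i * log (b i) - q i * log (q i) = q i * (log (b i) - log (q i)) := by ring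
        _ ≤ q i * (b i / q i - 1) := mul_le_mul_of_nonneg_left hlog h.le
        _ = b i - q i := by field_simp
  have := sum_le_sum fun i (_ : i ∈ univ) => key i
  rw [sum_sub_distrib, sum_sub_distrib] at this
  linarith

theorem sum_distOf_mul_distOf_div_le {Ω A B C : Type*} [Fintype Ω] [Fintype A] [DecidableEq A]
    [Fintype B] [DecidableEq B] [Fintype C] [DecidableEq C] {p : Ω → ℝ} (hp : ∀ ω, 0 ≤ p ω)
    (X : Ω → A) (Y : Ω → B) (Z : Ω → C) :
    ∑ t : A × B × C, distOf p (fun ω => (X ω, Z ω)) (t.1, t.2.2)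
        * distOf p (fun ω => (Y ω, Z ω)) (t.2.1, t.2.2) / distOf p Z t.2.2 ≤ ∑ ω, p ω := by
  calc _ = ∑ s : B × C, distOf p Z s.2 * distOf p (fun ω => (Y ω, Z ω)) s / distOf p Z s.2 := by
        rw [Fintype.sum_prod_type, sum_comm]
        refine sum_congr rfl fun s _ => ?_
        dsimp only
        rw [← sum_div, ← sum_mul, sum_distOf_prod_left]
    _ ≤ ∑ s : B × C, distOf p (fun ω => (Y ω, Z ω)) s := sum_le_sum fun s _ => by
        rw [mul_div_right_comm]
        exact mul_le_of_le_one_left (distOf_nonneg hp _ s) (div_self_le_one _)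
    _ = ∑ ω, p ω := sum_distOf _

theorem CMId_nonneg {Ω A B C : Type*} [Fintype Ω] [Fintype A] [DecidableEq A] [Fintype B]
    [DecidableEq B] [Fintype C] [DecidableEq C] {p : Ω → ℝ} (hp : ∀ ω, 0 ≤ p ω)
    (X : Ω → A) (Y : Ω → B) (Z : Ω → C) : 0 ≤ CMId p X Y Z := by
  set q := distOf p fun ω => (X ω, Y ω, Z ω)
  set qxz := distOf p fun ω => (X ω, Z ω)
  set qyz := distOf p fun ω => (Y ω, Z ω)
  set qz := distOf p Z
  have hxz : Hd p (fun ω => (X ω, Z ω)) = -∑ t, q t * log (qxz (t.1, t.2.2)) :=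
    Hd_comp_eq_sum (fun ω => (X ω, Y ω, Z ω)) fun t => (t.1, t.2.2)
  have hyz : Hd p (fun ω => (Y ω, Z ω)) = -∑ t, q t * log (qyz (t.2.1, t.2.2)) :=
    Hd_comp_eq_sum (fun ω => (X ω, Y ω, Z ω)) fun t => (t.2.1, t.2.2)
  have hz : Hd p Z = -∑ t, q t * log (qz t.2.2) :=
    Hd_comp_eq_sum (fun ω => (X ω, Y ω, Z ω)) fun t => t.2.2
  have hq : ∀ t, 0 ≤ q t := distOf_nonneg hp _
  -- `CMId` is the relative entropy of `p(x,y,z)` with respect to `p(x,z) p(y,z) / p(z)`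
  set b : A × B × C → ℝ := fun t => qxz (t.1, t.2.2) * qyz (t.2.1, t.2.2) / qz t.2.2
  have hpos : ∀ t, 0 < q t → 0 < qxz (t.1, t.2.2) ∧ 0 < qyz (t.2.1, t.2.2) ∧ 0 < qz t.2.2 := by
    intro t ht
    have hqxz := ht.trans_le (distOf_le_distOf_comp hp _ (fun t => (t.1, t.2.2)) t)
    exact ⟨hqxz, ht.trans_le (distOf_le_distOf_comp hp _ (fun t => (t.2.1, t.2.2)) t),
      hqxz.trans_le (distOf_le_distOf_comp hp _ Prod.snd _)⟩
  have hlog : ∀ t, q t * log (b t) = q t * log (qxz (t.1, t.2.2))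
      + q t * log (qyz (t.2.1, t.2.2)) - q t * log (qz t.2.2) := by
    intro t
    rcases (hq t).eq_or_lt with h | h
    · simp [← h]
    · obtain ⟨h1, h2, h3⟩ := hpos t h
      rw [log_div (by positivity) h3.ne', log_mul h1.ne' h2.ne']
      ring
  have hmass : ∑ t, b t ≤ ∑ t, q t :=
    (sum_distOf_mul_distOf_div_le hp X Y Z).trans_eq (sum_distOf _).symm
  have hb : ∀ t, 0 ≤ b t := fun t =>
    div_nonneg (mul_nonneg (distOf_nonneg hp _ _) (distOf_nonneg hp _ _)) (distOf_nonneg hp _ _)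
  have gibbs := sum_mul_log_le_sum_mul_log hq hb
    (fun t ht => by obtain ⟨h1, h2, h3⟩ := hpos t ht; positivity) hmass
  rw [sum_congr rfl fun t _ => hlog t, sum_sub_distrib, sum_add_distrib] at gibbs
  rw [CMId, hxz, hyz, hz, Hd]
  linarith

section Identities

variable {Ω A B C D E : Type*} [Fintype Ω] [Fintype A] [DecidableEq A] [Fintype B]
  [DecidableEq B] [Fintype C] [DecidableEq C] [Fintype D] [DecidableEq D] [Fintype E]
  [DecidableEq E] {p : Ω → ℝ}

theorem CMId_congr {A' B' C' : Type*} [Fintype A'] [DecidableEq A'] [Fintype B'] [DecidableEq B']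
    [Fintype C'] [DecidableEq C'] {X : Ω → A} {Y : Ω → B} {Z : Ω → C} {X' : Ω → A'}
    {Y' : Ω → B'} {Z' : Ω → C'} (hX : ∀ ω ω', X ω = X ω' ↔ X' ω = X' ω')
    (hY : ∀ ω ω', Y ω = Y ω' ↔ Y' ω = Y' ω') (hZ : ∀ ω ω', Z ω = Z ω' ↔ Z' ω = Z' ω') :
    CMId p X Y Z = CMId p X' Y' Z' := by
  have hXZ : Hd p (fun ω => (X ω, Z ω)) = Hd p (fun ω => (X' ω, Z' ω)) :=
    Hd_congr fun _ _ => by simp only [Prod.mk.injEq, hX, hZ]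
  have hYZ : Hd p (fun ω => (Y ω, Z ω)) = Hd p (fun ω => (Y' ω, Z' ω)) :=
    Hd_congr fun _ _ => by simp only [Prod.mk.injEq, hY, hZ]
  have hXYZ : Hd p (fun ω => (X ω, Y ω, Z ω)) = Hd p (fun ω => (X' ω, Y' ω, Z' ω)) :=
    Hd_congr fun _ _ => by simp only [Prod.mk.injEq, hX, hY, hZ]
  rw [CMId, CMId, hXZ, hYZ, hXYZ, Hd_congr hZ]

theorem CMId_comm (X : Ω → A) (Y : Ω → B) (Z : Ω → C) : CMId p X Y Z = CMId p Y X Z := by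
  have h : Hd p (fun ω => (X ω, Y ω, Z ω)) = Hd p (fun ω => (Y ω, X ω, Z ω)) :=
    Hd_congr fun _ _ => by simp only [Prod.mk.injEq]; tauto
  rw [CMId, CMId, h]
  ring

theorem CMId_prod_right (X : Ω → A) (Y : Ω → B) (W : Ω → D) (Z : Ω → C) :
    CMId p X (fun ω => (Y ω, W ω)) Z = CMId p X Y Z + CMId p X W (fun ω => (Y ω, Z ω)) := by
  have h1 : Hd p (fun ω => ((Y ω, W ω), Z ω)) = Hd p (fun ω => (W ω, Y ω, Z ω)) :=
    Hd_congr fun _ _ => by simp only [Prod.mk.injEq]; tauto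
  have h2 : Hd p (fun ω => (X ω, (Y ω, W ω), Z ω)) = Hd p (fun ω => (X ω, W ω, Y ω, Z ω)) :=
    Hd_congr fun _ _ => by simp only [Prod.mk.injEq]; tauto
  rw [CMId, CMId, CMId, h1, h2]
  ring

theorem CMId_prod_right_eq_zero_iff (hp : ∀ ω, 0 ≤ p ω) (X : Ω → A) (Y : Ω → B) (W : Ω → D)
    (Z : Ω → C) : CMId p X (fun ω => (Y ω, W ω)) Z = 0 ↔
      CMId p X Y Z = 0 ∧ CMId p X W (fun ω => (Y ω, Z ω)) = 0 := by
  rw [CMId_prod_right]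
  exact add_eq_zero_iff_of_nonneg (CMId_nonneg hp _ _ _) (CMId_nonneg hp _ _ _)

theorem MId_add_CMId_swap (X : Ω → A) (Y : Ω → B) (Z : Ω → C) :
    MId p X Y + CMId p X Z Y = MId p X Z + CMId p X Y Z := by
  have h1 : Hd p (fun ω => (Z ω, Y ω)) = Hd p (fun ω => (Y ω, Z ω)) :=
    Hd_congr fun _ _ => by simp only [Prod.mk.injEq]; tauto
  have h2 : Hd p (fun ω => (X ω, Z ω, Y ω)) = Hd p (fun ω => (X ω, Y ω, Z ω)) :=
    Hd_congr fun _ _ => by simp only [Prod.mk.injEq]; tauto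
  rw [MId, MId, CMId, CMId, h1, h2]
  ring

theorem CMId_prod_prod_eq_add_of_CMId_eq_zero (hp : ∀ ω, 0 ≤ p ω) {X₁ : Ω → A} {Y₁ : Ω → B}
    {X₂ : Ω → D} {Y₂ : Ω → E} {Z : Ω → C}
    (h : CMId p (fun ω => (Y₁ ω, X₁ ω)) (fun ω => (Y₂ ω, X₂ ω)) Z = 0) :
    CMId p (fun ω => (X₁ ω, X₂ ω)) (fun ω => (Y₁ ω, Y₂ ω)) Z
      = CMId p X₁ Y₁ Z + CMId p X₂ Y₂ Z := by
  have hY : CMId p Y₂ Y₁ Z = 0 := by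
    have h' := ((CMId_prod_right_eq_zero_iff hp _ _ _ _).1 h).1
    rw [CMId_comm] at h'
    exact ((CMId_prod_right_eq_zero_iff hp _ _ _ _).1 h').1
  have hX : CMId p X₂ X₁ Z = 0 := by
    have h' : CMId p (fun ω => (Y₁ ω, X₁ ω)) (fun ω => (X₂ ω, Y₂ ω)) Z = 0 := by
      rw [← h]
      exact CMId_congr (fun _ _ => .rfl) (fun _ _ => by simp only [Prod.mk.injEq]; tauto)
        fun _ _ => .rfl
    have h'' := ((CMId_prod_right_eq_zero_iff hp _ _ _ _).1 h').1
    rw [CMId_comm, CMId_congr (Y' := fun ω => (X₁ ω, Y₁ ω)) (fun _ _ => .rfl)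
      (fun _ _ => by simp only [Prod.mk.injEq]; tauto) fun _ _ => .rfl] at h''
    exact ((CMId_prod_right_eq_zero_iff hp _ _ _ _).1 h'').1
  have hXX : Hd p (fun ω => ((X₁ ω, X₂ ω), Z ω)) = Hd p (fun ω => (X₂ ω, X₁ ω, Z ω)) :=
    Hd_congr fun _ _ => by simp only [Prod.mk.injEq]; tauto
  have hYY : Hd p (fun ω => ((Y₁ ω, Y₂ ω), Z ω)) = Hd p (fun ω => (Y₂ ω, Y₁ ω, Z ω)) :=
    Hd_congr fun _ _ => by simp only [Prod.mk.injEq]; tauto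
  have hXY₁ : Hd p (fun ω => ((Y₁ ω, X₁ ω), Z ω)) = Hd p (fun ω => (X₁ ω, Y₁ ω, Z ω)) :=
    Hd_congr fun _ _ => by simp only [Prod.mk.injEq]; tauto
  have hXY₂ : Hd p (fun ω => ((Y₂ ω, X₂ ω), Z ω)) = Hd p (fun ω => (X₂ ω, Y₂ ω, Z ω)) :=
    Hd_congr fun _ _ => by simp only [Prod.mk.injEq]; tauto
  have hall : Hd p (fun ω => ((Y₁ ω, X₁ ω), (Y₂ ω, X₂ ω), Z ω))
      = Hd p (fun ω => ((X₁ ω, X₂ ω), (Y₁ ω, Y₂ ω), Z ω)) :=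
    Hd_congr fun _ _ => by simp only [Prod.mk.injEq]; tauto
  rw [CMId, hXY₁, hXY₂, hall] at h
  rw [CMId] at hX hY
  rw [CMId, CMId, CMId, hXX, hYY]
  linarith

end Identities

section LongMarkovChain

variable {Ω A B C D E : Type*} [Fintype Ω] [Fintype A] [DecidableEq A] [Fintype B]
  [DecidableEq B] [Fintype C] [DecidableEq C] [Fintype D] [DecidableEq D] [Fintype E]
  [DecidableEq E] {p : Ω → ℝ} {U1 : Ω → A} {Y1 : Ω → B} {X : Ω → C} {Y2 : Ω → D} {U2 : Ω → E}

theorem CMId_branches_eq_zero_of_longMarkov (hp : ∀ ω, 0 ≤ p ω) (hM1 : CMId p Y2 Y1 X = 0)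
    (hM2 : CMId p U1 (fun ω => (X ω, Y2 ω)) Y1 = 0)
    (hM3 : CMId p U2 (fun ω => (X ω, Y1 ω, U1 ω)) Y2 = 0) :
    CMId p (fun ω => (Y1 ω, U1 ω)) (fun ω => (Y2 ω, U2 ω)) X = 0 := by
  have hU1 := ((CMId_prod_right_eq_zero_iff hp _ _ _ _).1 hM2).2
  have hU2 := ((CMId_prod_right_eq_zero_iff hp _ _ _ _).1 hM3).2
  rw [CMId_prod_right_eq_zero_iff hp, CMId_comm, CMId_prod_right_eq_zero_iff hp]
  refine ⟨⟨hM1, ?_⟩, ?_⟩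
  · rw [CMId_comm, ← hU1]
    exact CMId_congr (fun _ _ => .rfl) (fun _ _ => .rfl) fun _ _ => by
      simp only [Prod.mk.injEq]; tauto
  · rw [CMId_comm, ← hU2]
    exact CMId_congr (fun _ _ => .rfl) (fun _ _ => .rfl) fun _ _ => by
      simp only [Prod.mk.injEq]; tauto

theorem CMId_auxiliaries_source_eq_zero_of_longMarkov (hp : ∀ ω, 0 ≤ p ω)
    (hM2 : CMId p U1 (fun ω => (X ω, Y2 ω)) Y1 = 0)
    (hM3 : CMId p U2 (fun ω => (X ω, Y1 ω, U1 ω)) Y2 = 0) :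
    CMId p (fun ω => (U1 ω, U2 ω)) X (fun ω => (Y1 ω, Y2 ω)) = 0 := by
  have hU1 : CMId p U1 (fun ω => (Y2 ω, X ω)) Y1 = 0 := by
    rw [← hM2]
    exact CMId_congr (fun _ _ => .rfl) (fun _ _ => by simp only [Prod.mk.injEq]; tauto)
      fun _ _ => .rfl
  have hU2 : CMId p U2 (fun ω => ((Y1 ω, U1 ω), X ω)) Y2 = 0 := by
    rw [← hM3]
    exact CMId_congr (fun _ _ => .rfl) (fun _ _ => by simp only [Prod.mk.injEq]; tauto)
      fun _ _ => .rfl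
  rw [CMId_comm, CMId_prod_right_eq_zero_iff hp]
  constructor
  · rw [CMId_comm, ← ((CMId_prod_right_eq_zero_iff hp _ _ _ _).1 hU1).2]
    exact CMId_congr (fun _ _ => .rfl) (fun _ _ => .rfl) fun _ _ => by
      simp only [Prod.mk.injEq]; tauto
  · rw [CMId_comm, ← ((CMId_prod_right_eq_zero_iff hp _ _ _ _).1 hU2).2]
    exact CMId_congr (fun _ _ => .rfl) (fun _ _ => .rfl) fun _ _ => by
      simp only [Prod.mk.injEq]; tauto

end LongMarkovChain

theorem stmt15_general {Ω A B C D E : Type*} [Fintype Ω]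
    [Fintype A] [DecidableEq A] [Fintype B] [DecidableEq B] [Fintype C] [DecidableEq C]
    [Fintype D] [DecidableEq D] [Fintype E] [DecidableEq E]
    (p : Ω → ℝ) (hp : ∀ ω, 0 ≤ p ω)
    (U1 : Ω → A) (Y1 : Ω → B) (X : Ω → C) (Y2 : Ω → D) (U2 : Ω → E)
    -- long Markov chain U1 - Y1 - X - Y2 - U2,
    -- i.e. joint law p(x) p(y1|x) p(y2|x) p(u1|y1) p(u2|y2):
    (hM1 : CMId p Y2 Y1 X = 0)
    (hM2 : CMId p U1 (fun ω => (X ω, Y2 ω)) Y1 = 0)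
    (hM3 : CMId p U2 (fun ω => (X ω, Y1 ω, U1 ω)) Y2 = 0) :
    MId p (fun ω => (U1 ω, U2 ω)) (fun ω => (Y1 ω, Y2 ω))
      = MId p (fun ω => (U1 ω, U2 ω)) X + CMId p U1 Y1 X + CMId p U2 Y2 X := by
  have hchain := MId_add_CMId_swap (p := p) (fun ω => (U1 ω, U2 ω)) (fun ω => (Y1 ω, Y2 ω)) X
  rw [CMId_auxiliaries_source_eq_zero_of_longMarkov hp hM2 hM3,
    CMId_prod_prod_eq_add_of_CMId_eq_zero hp
      (CMId_branches_eq_zero_of_longMarkov hp hM1 hM2 hM3)] at hchain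
  linarith

theorem stmt15 {Ω A B C D E : Type*} [Fintype Ω]
    [Fintype A] [DecidableEq A] [Fintype B] [DecidableEq B] [Fintype C] [DecidableEq C]
    [Fintype D] [DecidableEq D] [Fintype E] [DecidableEq E]
    (p : Ω → ℝ) (hp : ∀ ω, 0 ≤ p ω) (hp1 : ∑ ω, p ω = 1)
    (U1 : Ω → A) (Y1 : Ω → B) (X : Ω → C) (Y2 : Ω → D) (U2 : Ω → E)
    -- long Markov chain U1 - Y1 - X - Y2 - U2,
    -- i.e. joint law p(x) p(y1|x) p(y2|x) p(u1|y1) p(u2|y2):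
    (hM1 : CMId p Y2 Y1 X = 0)
    (hM2 : CMId p U1 (fun ω => (X ω, Y2 ω)) Y1 = 0)
    (hM3 : CMId p U2 (fun ω => (X ω, Y1 ω, U1 ω)) Y2 = 0) :
    MId p (fun ω => (U1 ω, U2 ω)) (fun ω => (Y1 ω, Y2 ω))
      = MId p (fun ω => (U1 ω, U2 ω)) X + CMId p U1 Y1 X + CMId p U2 Y2 X :=
  stmt15_general p hp U1 Y1 X Y2 U2 hM1 hM2 hM3
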